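/- Let X be a smooth manifold, ξ a complete smooth vector field on X with flow φ_t, and let γ be a periodic orbit of ξ through a point x₀ with prime period τ₀ > 0, with ξ(x₀) ≠ 0. Let Σ be an embedded hypersurface through x₀ transversal to ξ. Then there is an open neighborhood V ⊆ Σ of x₀ and a smooth function η : V → ℝ with η(x₀) = τ₀ such that the Poincaré first-return map P : V → Σ, P(x) = φ_{η(x)}(x), is well defined and smooth, and P(x₀) = x₀. -/

import Mathlib

open Set

/-- Existence and smoothness of the Poincaré return map of a periodic orbit:
for a smooth complete flow `φ` with vector field `ξ`, a periodic point `x₀`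
with period `τ₀ > 0` and `ξ x₀ ≠ 0`, and a hypersurface
`Σ = {x | ℓ x = ℓ x₀}` transversal to `ξ` at `x₀`, there are a neighborhood
`V` of `x₀` in `Σ` and a smooth return time `η` with `η x₀ = τ₀`, such that the
return map `P x = φ (η x) x` maps `V` into `Σ`, is smooth, and `P x₀ = x₀`. -/
theorem stmt12 {E : Type*} [NormedAddCommGroup E] [NormedSpace ℝ E]
    [FiniteDimensional ℝ E]
    (φ : ℝ → E → E)
    (hφ : ContDiff ℝ (⊤ : ℕ∞) fun p : ℝ × E => φ p.1 p.2)
    (hφ0 : ∀ x, φ 0 x = x)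
    (hφadd : ∀ s t x, φ (s + t) x = φ s (φ t x))
    (ξ : E → E) (hξ : ∀ x, HasDerivAt (fun t => φ t x) (ξ x) 0)
    (x₀ : E) (τ₀ : ℝ) (hτ₀ : 0 < τ₀) (hper : φ τ₀ x₀ = x₀)
    (hξ₀ : ξ x₀ ≠ 0)
    (ℓ : E →L[ℝ] ℝ) (htransv : ℓ (ξ x₀) ≠ 0) :
    ∃ (U : Set E) (η : E → ℝ),
      IsOpen U ∧ x₀ ∈ U ∧
      ContDiffOn ℝ (⊤ : ℕ∞) η U ∧ η x₀ = τ₀ ∧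
      (∀ x ∈ U ∩ {y : E | ℓ y = ℓ x₀}, φ (η x) x ∈ {y : E | ℓ y = ℓ x₀}) ∧
      ContDiffOn ℝ (⊤ : ℕ∞) (fun x => φ (η x) x) U ∧
      φ (η x₀) x₀ = x₀ := by
  classical
  set f : ℝ × E → E := fun p => φ p.1 p.2 with hf_def
  set a : ℝ × E := (τ₀, x₀) with ha_def
  have hfa : HasFDerivAt f (fderiv ℝ f a) a :=
    (hφ.differentiable (by simp) a).hasFDerivAt
  set D : ℝ × E →L[ℝ] E := fderiv ℝ f a with hD_def
  set c : ℝ := ℓ (ξ x₀) with hc_def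
  have hc : c ≠ 0 := htransv
  -- derivative of t ↦ φ t x₀ at τ₀ is ξ x₀
  have heq : (fun s : ℝ => φ (τ₀ + s) x₀) = fun s => φ s x₀ := by
    funext s; rw [add_comm, hφadd, hper]
  have hg : HasDerivAt (fun s => φ (τ₀ + s) x₀) (ξ x₀) (τ₀ - τ₀) := by
    rw [sub_self, heq]; exact hξ x₀
  have hu : HasDerivAt (fun t : ℝ => t - τ₀) 1 τ₀ := (hasDerivAt_id τ₀).sub_const τ₀
  have h1 : HasDerivAt (fun t => φ t x₀) (ξ x₀) τ₀ := by
    have h := hg.scomp_of_eq τ₀ hu rfl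
    simp only [one_smul] at h
    convert h using 1
    funext t
    simp [add_sub_cancel]
  have hline : HasDerivAt (fun t : ℝ => ((t, x₀) : ℝ × E)) ((1 : ℝ), (0 : E)) τ₀ :=
    (hasDerivAt_id τ₀).prodMk (hasDerivAt_const τ₀ x₀)
  have h2 : HasDerivAt (fun t => φ t x₀) (D (1, 0)) τ₀ :=
    HasFDerivAt.comp_hasDerivAt (l := f) (f := fun t : ℝ => ((t, x₀) : ℝ × E)) τ₀ hfa hline
  have hD1 : D ((1 : ℝ), (0 : E)) = ξ x₀ := h2.unique h1
  have hkey : ∀ (t : ℝ) (v : E), ℓ (D (t, v)) = t * c + ℓ (D (0, v)) := by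
    intro t v
    have harg : (t • ((1 : ℝ), (0 : E)) + ((0 : ℝ), v)) = ((t, v) : ℝ × E) := by
      simp
    rw [← harg, map_add, map_smul, map_add, map_smul, hD1, smul_eq_mul]
  -- the auxiliary map G and its invertible derivative
  set G : ℝ × E → ℝ × E := fun p => (ℓ (f p), p.2) with hG_def
  have hG : ContDiff ℝ (⊤ : ℕ∞) G := (ℓ.contDiff.comp hφ).prodMk contDiff_snd
  set M : ℝ × E →L[ℝ] ℝ × E :=
    (ℓ.comp D).prod (ContinuousLinearMap.snd ℝ ℝ E) with hM_def
  set N : ℝ × E →L[ℝ] ℝ × E :=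
    (c⁻¹ • (ContinuousLinearMap.fst ℝ ℝ E -
      ((ℓ.comp D).comp (ContinuousLinearMap.inr ℝ ℝ E)).comp
        (ContinuousLinearMap.snd ℝ ℝ E))).prod (ContinuousLinearMap.snd ℝ ℝ E) with hN_def
  have hNM : Function.LeftInverse N M := by
    intro p
    have h := hkey p.1 p.2
    simp only [hN_def, hM_def, ContinuousLinearMap.prod_apply, ContinuousLinearMap.coe_comp',
      Function.comp_apply, ContinuousLinearMap.coe_fst', ContinuousLinearMap.coe_snd',
      ContinuousLinearMap.smul_apply, ContinuousLinearMap.sub_apply,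
      ContinuousLinearMap.inr_apply, smul_eq_mul]
    refine Prod.ext ?_ rfl
    show c⁻¹ * (ℓ (D (p.1, p.2)) - ℓ (D (0, p.2))) = p.1
    rw [h]; field_simp; ring
  have hMN : Function.RightInverse N M := by
    intro q
    simp only [hN_def, hM_def, ContinuousLinearMap.prod_apply, ContinuousLinearMap.coe_comp',
      Function.comp_apply, ContinuousLinearMap.coe_fst', ContinuousLinearMap.coe_snd',
      ContinuousLinearMap.smul_apply, ContinuousLinearMap.sub_apply,
      ContinuousLinearMap.inr_apply, smul_eq_mul]
    refine Prod.ext ?_ rfl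
    show ℓ (D (c⁻¹ * (q.1 - ℓ (D (0, q.2))), q.2)) = q.1
    rw [hkey]; field_simp; ring
  set e₀ : (ℝ × E) ≃L[ℝ] ℝ × E := ContinuousLinearEquiv.equivOfInverse M N hNM hMN with he₀_def
  have hGM : HasFDerivAt G (M : ℝ × E →L[ℝ] ℝ × E) a :=
    (ℓ.hasFDerivAt.comp a hfa).prodMk (hasFDerivAt_snd)
  have hGM' : HasFDerivAt G (e₀ : ℝ × E →L[ℝ] ℝ × E) a := hGM
  -- inverse function theorem
  set F := hG.contDiffAt.toOpenPartialHomeomorph G hGM' (by simp) with hF_def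
  have hFcoe : (F : ℝ × E → ℝ × E) = G := rfl
  have ha_src : a ∈ F.source :=
    hG.contDiffAt.mem_toOpenPartialHomeomorph_source hGM' (by simp)
  -- the open set where the derivative of G is invertible
  set W : Set (ℝ × E) :=
    (fderiv ℝ G) ⁻¹' (range ((↑) : ((ℝ × E) ≃L[ℝ] ℝ × E) → (ℝ × E →L[ℝ] ℝ × E))) with hW_def
  have hWopen : IsOpen W :=
    ContinuousLinearEquiv.isOpen.preimage (hG.continuous_fderiv (by simp))
  have haW : a ∈ W := ⟨e₀, hGM'.fderiv.symm⟩
  set U' : Set (ℝ × E) := F.target ∩ F.symm ⁻¹' W with hU'_def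
  have hU'open : IsOpen U' := F.isOpen_inter_preimage_symm hWopen
  -- the neighborhood in E
  set j : E → ℝ × E := fun x => (ℓ x₀, x) with hj_def
  have hjc : ContDiff ℝ (⊤ : ℕ∞) j := contDiff_const.prodMk contDiff_id
  set U : Set E := j ⁻¹' U' with hU_def
  have hUopen : IsOpen U := hU'open.preimage hjc.continuous
  have hGa : G a = (ℓ x₀, x₀) := by
    simp only [hG_def, hf_def, ha_def, hper]
  have hjx₀ : j x₀ = G a := by rw [hGa]
  have hx₀U : x₀ ∈ U := by
    have h1 : j x₀ ∈ F.target := by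
      rw [hjx₀, ← hFcoe]; exact F.map_source ha_src
    have h2 : F.symm (j x₀) = a := by
      rw [hjx₀, ← hFcoe]; exact F.left_inv ha_src
    exact ⟨h1, by rw [mem_preimage, h2]; exact haW⟩
  -- the return time
  set η : E → ℝ := fun x => (F.symm (j x)).1 with hη_def
  have hFsymmx₀ : F.symm (j x₀) = a := by
    rw [hjx₀, ← hFcoe]; exact F.left_inv ha_src
  have hη₀ : η x₀ = τ₀ := by rw [hη_def]; simp [hFsymmx₀, ha_def]
  -- smoothness of F.symm on U'
  have hsymm : ∀ y ∈ U', ContDiffAt ℝ (⊤ : ℕ∞) F.symm y := by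
    intro y hy
    obtain ⟨hyt, hyW⟩ := hy
    obtain ⟨e, he⟩ := hyW
    have hdiff : HasFDerivAt G (fderiv ℝ G (F.symm y)) (F.symm y) :=
      (hG.differentiable (by simp) (F.symm y)).hasFDerivAt
    have hdiff' : HasFDerivAt (F : ℝ × E → ℝ × E) (e : ℝ × E →L[ℝ] ℝ × E) (F.symm y) := by
      rw [hFcoe, he]; exact hdiff
    exact F.contDiffAt_symm hyt hdiff' (by rw [hFcoe]; exact hG.contDiffAt)
  have hηsmooth : ContDiffOn ℝ (⊤ : ℕ∞) η U := by
    intro x hx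
    have hjx : ContDiffAt ℝ (⊤ : ℕ∞) j x := hjc.contDiffAt
    have h := ((hsymm (j x) hx).comp x hjx)
    exact (contDiff_fst.contDiffAt.comp x h).contDiffWithinAt
  -- the inverse property
  have hGinv : ∀ x ∈ U, G (F.symm (j x)) = j x := by
    intro x hx
    have := F.right_inv hx.1
    rwa [hFcoe] at this
  have hsnd : ∀ x ∈ U, (F.symm (j x)).2 = x := by
    intro x hx
    have := congrArg Prod.snd (hGinv x hx)
    simpa [hG_def, hj_def] using this
  have hret : ∀ x ∈ U, ℓ (φ (η x) x) = ℓ x₀ := by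
    intro x hx
    have h1 := congrArg Prod.fst (hGinv x hx)
    simp only [hG_def, hf_def, hj_def] at h1
    rw [hsnd x hx] at h1
    exact h1
  refine ⟨U, η, hUopen, hx₀U, hηsmooth, hη₀, ?_, ?_, ?_⟩
  · intro x hx
    exact hret x hx.1
  · have : ContDiffOn ℝ (⊤ : ℕ∞) (fun x => f (η x, x)) U :=
      hφ.comp_contDiffOn (hηsmooth.prodMk contDiffOn_id)
    exact this
  · rw [hη₀, hper]
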